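/- Let n be a positive integer and x_1, …, x_n ≥ 0. Define a_i = (x_1 + ⋯ + x_i)/i and let m_i be the lower median of x_1, …, x_i. Then Σ_{i=1}^n (m_i − a_i)^2 ≤ 2 Σ_{i=1}^n x_i^2. -/

import Mathlib

/-! The lower median `m` of `x₁, …, xᵢ` differs from their mean by at most `1/i` times the sum
of the `⌊i/2⌋` largest values: the values below `m` lie in `[0, m]`, and those above it are at
least `m` and at least as many. That sum is at most `T ⌊i/2⌋`, where `T r` is the sum of the
`r` largest of all of `x₁, …, xₙ`. Grouping `i = 2r, 2r + 1` bounds the left side by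
`½ ∑ (T r / r)²`, and Hardy's inequality for the decreasing rearrangement of `x` gives
`∑ (T r / r)² ≤ 4 ∑ xᵢ²`. -/

open MeasureTheory Set Filter

noncomputable def sortAsc (l : List ℝ) : List ℝ := l.mergeSort (· ≤ ·)
noncomputable def sortDesc (l : List ℝ) : List ℝ := (sortAsc l).reverse
noncomputable def listLowerMedian (l : List ℝ) : ℝ := (sortAsc l).getD ((l.length - 1) / 2) 0
def seg (x : ℕ → ℝ) (i : ℕ) : List ℝ := (List.range i).map (fun j => x (j+1))

lemma sortAsc_perm (l : List ℝ) : (sortAsc l).Perm l := List.mergeSort_perm l _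

lemma sortedLE_sortAsc (l : List ℝ) : (sortAsc l).SortedLE := List.sortedLE_mergeSort

lemma sortDesc_perm (l : List ℝ) : (sortDesc l).Perm l :=
  (List.reverse_perm _).trans (sortAsc_perm l)

lemma sortedGE_sortDesc (l : List ℝ) : (sortDesc l).SortedGE :=
  List.sortedGE_reverse.2 (sortedLE_sortAsc l)

lemma sortDesc_sublist {l₁ l₂ : List ℝ} (h : l₁.Sublist l₂) : (sortDesc l₁).Sublist (sortDesc l₂) :=
  List.sublist_of_subperm_of_sortedGE
    ((sortDesc_perm l₁).subperm.trans (h.subperm.trans (sortDesc_perm l₂).symm.subperm))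
    (sortedGE_sortDesc l₁) (sortedGE_sortDesc l₂)

/-- The sum of the `r` largest entries of `l` (of all of them if `l` is shorter). -/
noncomputable def topSum (l : List ℝ) (r : ℕ) : ℝ := ((sortDesc l).take r).sum

lemma topSum_zero (l : List ℝ) : topSum l 0 = 0 := by simp [topSum]

lemma sum_take_succ_le {l : List ℝ} {c : ℝ} (hc : ∀ a ∈ l, a ≤ c) (h0 : 0 ≤ c) (k : ℕ) :
    (l.take (k + 1)).sum ≤ (l.take k).sum + c := by
  by_cases hk : k < l.length
  · rw [List.sum_take_succ _ _ hk]
    gcongr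
    exact hc _ (List.getElem_mem hk)
  · rw [List.take_of_length_le (by omega), List.take_of_length_le (by omega)]
    linarith

lemma sum_take_le_sum_take_of_sublist {l₁ l₂ : List ℝ} (h : l₁.Sublist l₂)
    (hsorted : l₂.Pairwise (· ≥ ·)) (h0 : ∀ a ∈ l₂, 0 ≤ a) (r : ℕ) :
    (l₁.take r).sum ≤ (l₂.take r).sum := by
  induction h generalizing r with
  | slnil => rfl
  | @cons l₁ l₂ a hsub ih =>
    obtain ⟨ha, htail⟩ := List.pairwise_cons.1 hsorted
    have ih := ih htail (fun b hb => h0 b (List.mem_cons_of_mem a hb))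
    cases r with
    | zero => simp
    | succ k =>
      calc (l₁.take (k + 1)).sum ≤ (l₁.take k).sum + a :=
            sum_take_succ_le (fun b hb => ha b (hsub.subset hb))
              (h0 a List.mem_cons_self) k
        _ ≤ (l₂.take k).sum + a := by gcongr; exact ih k
        _ = ((a :: l₂).take (k + 1)).sum := by simp [add_comm]
  | cons_cons a _ ih =>
    have ih := ih (List.pairwise_cons.1 hsorted).2 (fun b hb => h0 b (List.mem_cons_of_mem a hb))
    cases r with
    | zero => simp
    | succ k => simpa using ih k

lemma topSum_le_topSum_of_sublist {l₁ l₂ : List ℝ} (h : l₁.Sublist l₂) (h0 : ∀ a ∈ l₂, 0 ≤ a)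
    (r : ℕ) : topSum l₁ r ≤ topSum l₂ r :=
  sum_take_le_sum_take_of_sublist (sortDesc_sublist h) (sortedGE_sortDesc l₂).pairwise
    (fun a ha => h0 a ((sortDesc_perm l₂).subset ha)) r

lemma abs_length_mul_getElem_sub_sum_le {s : List ℝ} (hs : s.SortedLE) (h0 : ∀ a ∈ s, 0 ≤ a)
    {k : ℕ} (hk : 2 * k < s.length) :
    |s.length * s[k] - s.sum| ≤ (s.drop (k + 1)).sum := by
  have hsplit : s = s.take k ++ s[k] :: s.drop (k + 1) := by
    rw [← List.drop_eq_getElem_cons, List.take_append_drop]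
  have hsorted := hs.pairwise
  rw [hsplit, List.pairwise_append, List.pairwise_cons] at hsorted
  obtain ⟨-, ⟨hhigh, -⟩, hlow⟩ := hsorted
  have hm0 : 0 ≤ s[k] := h0 _ (List.getElem_mem _)
  have hsum : s.sum = (s.take k).sum + s[k] + (s.drop (k + 1)).sum := by
    rw [← List.sum_take_add_sum_drop s k, List.drop_eq_getElem_cons, List.sum_cons, add_assoc]
  have hlow_le : (s.take k).sum ≤ k * s[k] := by
    simpa [Nat.min_eq_left (by omega : k ≤ s.length)] using
      List.sum_le_card_nsmul _ _ fun a ha => hlow a ha _ List.mem_cons_self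
  have hlow_nonneg : 0 ≤ (s.take k).sum :=
    List.sum_nonneg fun a ha => h0 a (List.mem_of_mem_take ha)
  have hhigh_ge : ((s.length - (k + 1) : ℕ) : ℝ) * s[k] ≤ (s.drop (k + 1)).sum := by
    simpa using List.card_nsmul_le_sum _ _ hhigh
  have hcast : ((s.length - (k + 1) : ℕ) : ℝ) = s.length - k - 1 := by
    rw [Nat.cast_sub (by omega)]; push_cast; ring
  have hk' : (2 * k + 1 : ℝ) ≤ s.length := by exact_mod_cast hk
  rw [hcast] at hhigh_ge
  rw [hsum, abs_le]
  constructor <;> nlinarith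

lemma abs_listLowerMedian_sub_mean_le {l : List ℝ} (hl : l ≠ []) (h0 : ∀ a ∈ l, 0 ≤ a) :
    |listLowerMedian l - l.sum / l.length| ≤ topSum l (l.length / 2) / l.length := by
  have hlen : (sortAsc l).length = l.length := (sortAsc_perm l).length_eq
  have hpos : 0 < l.length := List.length_pos_iff.2 hl
  have hk : 2 * ((l.length - 1) / 2) < (sortAsc l).length := by omega
  have hmed : listLowerMedian l = (sortAsc l)[(l.length - 1) / 2] :=
    List.getD_eq_getElem _ _ _
  have htop : topSum l (l.length / 2) = ((sortAsc l).drop ((l.length - 1) / 2 + 1)).sum := by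
    rw [topSum, sortDesc, List.take_reverse, List.sum_reverse, hlen]
    congr 2
    omega
  have key := abs_length_mul_getElem_sub_sum_le (sortedLE_sortAsc l)
    (fun a ha => h0 a ((sortAsc_perm l).subset ha)) hk
  rw [← hmed, hlen, (sortAsc_perm l).sum_eq, ← htop] at key
  have hpos' : (0 : ℝ) < l.length := by exact_mod_cast hpos
  rw [show listLowerMedian l - l.sum / l.length
      = (l.length * listLowerMedian l - l.sum) / l.length by field_simp,
    abs_div, abs_of_pos hpos']
  exact div_le_div_of_nonneg_right key hpos'.le

lemma sq_div_sub_two_mul_le {c : ℝ} (hc : 0 < c) (u v : ℝ) :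
    (v / (c + 1)) ^ 2 - 2 * (v / (c + 1)) * (v - u) ≤ u ^ 2 / c - v ^ 2 / (c + 1) := by
  have key : u ^ 2 / c - v ^ 2 / (c + 1) - ((v / (c + 1)) ^ 2 - 2 * (v / (c + 1)) * (v - u))
      = ((c + 1) * u - c * v) ^ 2 / (c * (c + 1) ^ 2) := by
    field_simp
    ring
  have : 0 ≤ ((c + 1) * u - c * v) ^ 2 / (c * (c + 1) ^ 2) := by positivity
  linarith

/-- Hardy's inequality for `p = 2`, written for the partial sums `T r` of a sequence. -/
theorem sum_sq_div_le_four_mul_sum_sq_sub (T : ℕ → ℝ) (hT : T 0 = 0) (N : ℕ) :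
    ∑ r ∈ Finset.range N, (T (r + 1) / (r + 1)) ^ 2
      ≤ 4 * ∑ r ∈ Finset.range N, (T (r + 1) - T r) ^ 2 := by
  set Q := ∑ r ∈ Finset.range N, (T (r + 1) / (r + 1)) ^ 2
  set P := ∑ r ∈ Finset.range N, T (r + 1) / (r + 1) * (T (r + 1) - T r)
  set X := ∑ r ∈ Finset.range N, (T (r + 1) - T r) ^ 2
  have htelescope : Q - 2 * P ≤ -(T N ^ 2 / N) := by
    calc Q - 2 * P
        = ∑ r ∈ Finset.range N,
            ((T (r + 1) / (r + 1)) ^ 2 - 2 * (T (r + 1) / (r + 1)) * (T (r + 1) - T r)) := by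
          simp only [Q, P, Finset.sum_sub_distrib, Finset.mul_sum, mul_assoc]
      _ ≤ ∑ r ∈ Finset.range N, (T r ^ 2 / r - T (r + 1) ^ 2 / ↑(r + 1)) := by
          refine Finset.sum_le_sum fun r _ => ?_
          rcases Nat.eq_zero_or_pos r with rfl | hr
          · simp [hT]; nlinarith
          · push_cast
            exact sq_div_sub_two_mul_le (by exact_mod_cast hr) _ _
      _ = -(T N ^ 2 / N) := by
          rw [Finset.sum_range_sub' (fun r => T r ^ 2 / r)]
          simp
  have hQ2P : Q ≤ 2 * P := by
    have : 0 ≤ T N ^ 2 / N := by positivity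
    linarith
  have hCS : P ^ 2 ≤ Q * X := Finset.sum_mul_sq_le_sq_mul_sq _ _ _
  have hQ : 0 ≤ Q := by positivity
  have hX : 0 ≤ X := by positivity
  nlinarith

lemma sq_div_two_mul_add_sq_div_two_mul_add_one_le {c : ℝ} (hc : 0 < c) (a : ℝ) :
    (a / (2 * c)) ^ 2 + (a / (2 * c + 1)) ^ 2 ≤ (a / c) ^ 2 / 2 := by
  have hodd : (a / (2 * c + 1)) ^ 2 ≤ (a / (2 * c)) ^ 2 := by
    rw [div_pow, div_pow]
    gcongr
    linarith
  have heven : (a / (2 * c)) ^ 2 = (a / c) ^ 2 / 4 := by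
    field_simp
    ring
  linarith

theorem sum_sq_div_half_index_le (T : ℕ → ℝ) (hT : T 0 = 0) (n : ℕ) :
    ∑ i ∈ Finset.Icc 1 n, (T (i / 2) / i) ^ 2
      ≤ (∑ r ∈ Finset.range n, (T (r + 1) / (r + 1)) ^ 2) / 2 := by
  have hodd : ∀ n : ℕ, ∑ i ∈ Finset.Icc 1 (2 * n + 1), (T (i / 2) / i) ^ 2
      ≤ (∑ r ∈ Finset.range n, (T (r + 1) / (r + 1)) ^ 2) / 2 := by
    intro n
    induction n with
    | zero => simp [hT]
    | succ n ih =>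
      rw [show 2 * (n + 1) + 1 = 2 * n + 1 + 1 + 1 by ring,
        Finset.sum_Icc_succ_top (by omega), Finset.sum_Icc_succ_top (by omega),
        Finset.sum_range_succ, show (2 * n + 1 + 1) / 2 = n + 1 by omega,
        show (2 * n + 1 + 1 + 1) / 2 = n + 1 by omega]
      have hpair := sq_div_two_mul_add_sq_div_two_mul_add_one_le
        (by positivity : (0 : ℝ) < n + 1) (T (n + 1))
      push_cast
      rw [show (2 * n + 1 + 1 : ℝ) = 2 * (n + 1) by ring,
        show (2 * n + 2 + 1 : ℝ) = 2 * (n + 1) + 1 by ring]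
      linarith
  calc ∑ i ∈ Finset.Icc 1 n, (T (i / 2) / i) ^ 2
      ≤ ∑ i ∈ Finset.Icc 1 (2 * n + 1), (T (i / 2) / i) ^ 2 :=
        Finset.sum_le_sum_of_subset_of_nonneg (Finset.Icc_subset_Icc_right (by omega))
          fun _ _ _ => sq_nonneg _
    _ ≤ _ := hodd n

lemma sum_range_sum_take_succ_sub (f : ℝ → ℝ) (l : List ℝ) :
    ∑ r ∈ Finset.range l.length, f ((l.take (r + 1)).sum - (l.take r).sum) = (l.map f).sum := by
  induction l with
  | nil => simp
  | cons a l ih =>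
    rw [List.length_cons, Finset.sum_range_succ', List.map_cons, List.sum_cons, ← ih]
    simp only [List.take_succ_cons, List.sum_cons, add_sub_add_left_eq_sub, List.take_zero,
      List.sum_nil, add_zero, sub_zero]
    ring

lemma sum_range_topSum_succ_sub (f : ℝ → ℝ) (l : List ℝ) :
    ∑ r ∈ Finset.range l.length, f (topSum l (r + 1) - topSum l r) = (l.map f).sum := by
  rw [← (sortDesc_perm l).length_eq, ← ((sortDesc_perm l).map f).sum_eq]
  exact sum_range_sum_take_succ_sub f _

lemma seg_length (x : ℕ → ℝ) (i : ℕ) : (seg x i).length = i := by simp [seg]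

lemma seg_sublist (x : ℕ → ℝ) {i n : ℕ} (h : i ≤ n) : (seg x i).Sublist (seg x n) :=
  (List.range_sublist.2 h).map _

lemma sum_map_seg (f : ℝ → ℝ) (x : ℕ → ℝ) (n : ℕ) :
    ((seg x n).map f).sum = ∑ j ∈ Finset.Icc 1 n, f (x j) := by
  induction n with
  | zero => simp [seg]
  | succ n ih =>
    rw [Finset.sum_Icc_succ_top (by omega), ← ih]
    simp [seg, List.range_succ]

lemma sum_seg (x : ℕ → ℝ) (n : ℕ) : (seg x n).sum = ∑ j ∈ Finset.Icc 1 n, x j := by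
  simpa using sum_map_seg id x n

theorem median_hardy_stmt17_general (n : ℕ) (x : ℕ → ℝ)
    (hx : ∀ j, 1 ≤ j → j ≤ n → 0 ≤ x j) :
    ∑ i ∈ Finset.Icc 1 n,
        (listLowerMedian (seg x i) - (∑ j ∈ Finset.Icc 1 i, x j) / i) ^ 2
      ≤ 2 * ∑ i ∈ Finset.Icc 1 n, x i ^ 2 := by
  have hseg : ∀ a ∈ seg x n, 0 ≤ a := by
    simp only [seg, List.mem_map, List.mem_range]
    rintro _ ⟨j, hj, rfl⟩
    exact hx (j + 1) (by omega) (by omega)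
  set T := topSum (seg x n)
  have hterm : ∀ i ∈ Finset.Icc 1 n,
      (listLowerMedian (seg x i) - (∑ j ∈ Finset.Icc 1 i, x j) / i) ^ 2 ≤ (T (i / 2) / i) ^ 2 := by
    intro i hi
    obtain ⟨hi1, hin⟩ := Finset.mem_Icc.1 hi
    have hsub := seg_sublist x hin
    have hdev := abs_listLowerMedian_sub_mean_le
      (List.ne_nil_of_length_pos (by rw [seg_length]; omega)) fun a ha => hseg a (hsub.subset ha)
    rw [seg_length, sum_seg] at hdev
    rw [← sq_abs]
    gcongr
    exact hdev.trans (by gcongr; exact topSum_le_topSum_of_sublist hsub hseg _)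
  calc _ ≤ ∑ i ∈ Finset.Icc 1 n, (T (i / 2) / i) ^ 2 := Finset.sum_le_sum hterm
    _ ≤ (∑ r ∈ Finset.range n, (T (r + 1) / (r + 1)) ^ 2) / 2 :=
      sum_sq_div_half_index_le T (topSum_zero _) n
    _ ≤ 4 * (∑ r ∈ Finset.range n, (T (r + 1) - T r) ^ 2) / 2 := by
      gcongr
      exact sum_sq_div_le_four_mul_sum_sq_sub T (topSum_zero _) n
    _ = 2 * ∑ i ∈ Finset.Icc 1 n, x i ^ 2 := by
      have := sum_range_topSum_succ_sub (· ^ 2) (seg x n)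
      rw [seg_length, sum_map_seg] at this
      rw [this]
      ring

theorem median_hardy_stmt17 (n : ℕ) (hn : 1 ≤ n) (x : ℕ → ℝ)
    (hx : ∀ j, 1 ≤ j → j ≤ n → 0 ≤ x j) :
    ∑ i ∈ Finset.Icc 1 n,
        (listLowerMedian (seg x i) - (∑ j ∈ Finset.Icc 1 i, x j) / i) ^ 2
      ≤ 2 * ∑ i ∈ Finset.Icc 1 n, x i ^ 2 :=
  median_hardy_stmt17_general n x hx
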